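/- There exists a constant D > 0 such that for every r > 0, setting p = (−Dr, 0, 0) and q = (Dr, 0, 0), one has {x ∈ ℝ³ : d((0,0,0), x) < r} ⊆ J(p,q) and τ(p,q) = 2Dr, where d is the sub-Riemannian distance and τ the time separation function of the sub-Lorentzian Heisenberg group. -/

import Mathlib

open MeasureTheory Set

/-- `γ` is Lipschitz on `[0,1]`. -/
def IsLipCurve3 (γ : ℝ → ℝ × ℝ × ℝ) : Prop :=
  ∃ K, LipschitzOnWith K γ (Icc (0:ℝ) 1)

/-- A curve in the Heisenberg group is horizontal if, for almost every `t ∈ [0,1]`,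
`γ₃'(t) = (γ₁(t)γ₂'(t) − γ₁'(t)γ₂(t))/2`. -/
def Horizontal (γ : ℝ → ℝ × ℝ × ℝ) : Prop :=
  ∀ᵐ t ∂(volume.restrict (Icc (0:ℝ) 1)),
    deriv (fun s => (γ s).2.2) t =
      ((γ t).1 * deriv (fun s => (γ s).2.1) t -
        deriv (fun s => (γ s).1) t * (γ t).2.1) / 2

/-- A horizontal curve is future-directed causal if, for almost every `t ∈ [0,1]`,
`γ₁'(t) ≥ |γ₂'(t)|` and `γ₁'(t) > 0`. -/
def IsFDCausal3 (γ : ℝ → ℝ × ℝ × ℝ) : Prop :=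
  ∀ᵐ t ∂(volume.restrict (Icc (0:ℝ) 1)),
    |deriv (fun s => (γ s).2.1) t| ≤ deriv (fun s => (γ s).1) t ∧
      0 < deriv (fun s => (γ s).1) t

/-- A horizontal curve is future-directed timelike if, for almost every `t ∈ [0,1]`,
`γ₁'(t) > |γ₂'(t)|`. -/
def IsFDTimelike3 (γ : ℝ → ℝ × ℝ × ℝ) : Prop :=
  ∀ᵐ t ∂(volume.restrict (Icc (0:ℝ) 1)),
    |deriv (fun s => (γ s).2.1) t| < deriv (fun s => (γ s).1) t

/-- The Lorentzian length of a (causal) curve. -/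
noncomputable def lorLength3 (γ : ℝ → ℝ × ℝ × ℝ) : ℝ :=
  ∫ t in (0:ℝ)..1,
    Real.sqrt ((deriv (fun s => (γ s).1) t)^2 - (deriv (fun s => (γ s).2.1) t)^2)

/-- The sub-Riemannian length of a horizontal curve. -/
noncomputable def sRLength3 (γ : ℝ → ℝ × ℝ × ℝ) : ℝ :=
  ∫ t in (0:ℝ)..1,
    Real.sqrt ((deriv (fun s => (γ s).1) t)^2 + (deriv (fun s => (γ s).2.1) t)^2)

/-- Admissible (horizontal future-directed causal Lipschitz) curves from `p` to `q`. -/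
def AdmCurve (p q : ℝ × ℝ × ℝ) (γ : ℝ → ℝ × ℝ × ℝ) : Prop :=
  IsLipCurve3 γ ∧ Horizontal γ ∧ IsFDCausal3 γ ∧ γ 0 = p ∧ γ 1 = q

/-- Causal precedence: `p ≤ q`. -/
def CausalLE (p q : ℝ × ℝ × ℝ) : Prop :=
  p = q ∨ ∃ γ, AdmCurve p q γ

/-- The causal diamond `J(p,q)`. -/
def causalDiamond (p q : ℝ × ℝ × ℝ) : Set (ℝ × ℝ × ℝ) :=
  {r | CausalLE p r ∧ CausalLE r q}

/-- The time separation function `τ` (equal to `0`, by convention on real `sSup`,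
if there is no admissible curve). -/
noncomputable def timeSep (p q : ℝ × ℝ × ℝ) : ℝ :=
  sSup (lorLength3 '' {γ | AdmCurve p q γ})

/-- The sub-Riemannian distance. -/
noncomputable def sRDist (p q : ℝ × ℝ × ℝ) : ℝ :=
  sInf (sRLength3 '' {γ | IsLipCurve3 γ ∧ Horizontal γ ∧ γ 0 = p ∧ γ 1 = q})

/-!
A horizontal curve of sub-Riemannian length `ℓ` from the origin stays in the box `|x|, |y| ≤ ℓ`,
and since its height is `∫ (x y' - x' y) / 2`, it ends at height at most `ℓ ^ 2`. Conversely, from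
any point `p` the polynomial causal curve `t ↦ p * (a t, b t + C (t - t²), -a C t³ / 6)` reaches
`p * (a, b, c)` for `C = -6 c / a`, provided `a |b| + 6 |c| ≤ a²`; this places the box
`|x|, |y| ≤ r`, `|z| ≤ r²` inside `J((-10r, 0, 0), (10r, 0, 0))`. Finally `√(x'² - y'²) ≤ x'`,
with equality along the `x`-axis, so the time separation of two points of the `x`-axis is the
difference of their first coordinates.
-/

open Filter

lemma sqrt_sq_add_sq_le_abs_add_abs (a b : ℝ) : √(a ^ 2 + b ^ 2) ≤ |a| + |b| := by
  refine Real.sqrt_le_iff.mpr ⟨by positivity, ?_⟩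
  nlinarith [sq_abs a, sq_abs b, abs_nonneg a, abs_nonneg b]

lemma sqrt_sq_sub_sq_le_abs (a b : ℝ) : √(a ^ 2 - b ^ 2) ≤ |a| :=
  (Real.sqrt_le_sqrt (by nlinarith)).trans_eq (Real.sqrt_sq_eq_abs a)

lemma abs_half_cross_le {x₁ x₂ v₁ v₂ L : ℝ} (h₁ : |x₁| ≤ L) (h₂ : |x₂| ≤ L) :
    |(x₁ * v₂ - v₁ * x₂) / 2| ≤ L * √(v₁ ^ 2 + v₂ ^ 2) := by
  have hv₁ : |v₁| ≤ √(v₁ ^ 2 + v₂ ^ 2) := Real.abs_le_sqrt (by nlinarith)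
  have hv₂ : |v₂| ≤ √(v₁ ^ 2 + v₂ ^ 2) := Real.abs_le_sqrt (by nlinarith)
  have hL : 0 ≤ L := (abs_nonneg _).trans h₁
  rw [abs_div, abs_two, div_le_iff₀ two_pos]
  calc |x₁ * v₂ - v₁ * x₂| ≤ |x₁| * |v₂| + |v₁| * |x₂| := by
        rw [← abs_mul, ← abs_mul]; exact abs_sub _ _
    _ ≤ L * √(v₁ ^ 2 + v₂ ^ 2) + √(v₁ ^ 2 + v₂ ^ 2) * L := by gcongr
    _ = L * √(v₁ ^ 2 + v₂ ^ 2) * 2 := by ring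

lemma abs_sub_le_integral_of_abs_deriv_le {g S : ℝ → ℝ} {a b u : ℝ} (hu : u ∈ Icc a b)
    (hg : AbsolutelyContinuousOnInterval g a u) (hS : IntervalIntegrable S volume a b)
    (hgS : ∀ t, |deriv g t| ≤ S t) :
    |g u - g a| ≤ ∫ t in a..b, S t := by
  rw [← hg.integral_deriv_eq_sub]
  have hSu : IntervalIntegrable S volume a u :=
    hS.mono_set <| by
      rw [uIcc_of_le hu.1, uIcc_of_le (hu.1.trans hu.2)]
      exact Icc_subset_Icc le_rfl hu.2
  calc |∫ t in a..u, deriv g t| ≤ ∫ t in a..u, |deriv g t| :=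
        intervalIntegral.abs_integral_le_integral_abs hu.1
    _ ≤ ∫ t in a..u, S t :=
        intervalIntegral.integral_mono_on hu.1 hg.intervalIntegrable_deriv.abs hSu fun t _ => hgS t
    _ ≤ ∫ t in a..b, S t :=
        intervalIntegral.integral_mono_interval le_rfl hu.1 hu.2
          (Eventually.of_forall fun t => (abs_nonneg _).trans (hgS t)) hS

namespace IsLipCurve3

variable {γ : ℝ → ℝ × ℝ × ℝ}

lemma absolutelyContinuousOnInterval_comp (hγ : IsLipCurve3 γ) {f : ℝ × ℝ × ℝ → ℝ}
    {K : NNReal} (hf : LipschitzWith K f) {u : ℝ} (hu : u ∈ Icc (0 : ℝ) 1) :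
    AbsolutelyContinuousOnInterval (fun s => f (γ s)) 0 u := by
  obtain ⟨L, hL⟩ := hγ
  refine ((hf.comp_lipschitzOnWith hL).mono ?_).absolutelyContinuousOnInterval
  rw [uIcc_of_le hu.1]
  exact Icc_subset_Icc le_rfl hu.2

lemma intervalIntegrable_sRLength3_integrand (hγ : IsLipCurve3 γ) :
    IntervalIntegrable (fun t => √(deriv (fun s => (γ s).1) t ^ 2 +
      deriv (fun s => (γ s).2.1) t ^ 2)) volume 0 1 := by
  have h1 : (1 : ℝ) ∈ Icc (0 : ℝ) 1 := ⟨zero_le_one, le_rfl⟩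
  have hd₁ := (hγ.absolutelyContinuousOnInterval_comp (f := fun p => p.1)
    LipschitzWith.prod_fst h1).intervalIntegrable_deriv
  have hd₂ := (hγ.absolutelyContinuousOnInterval_comp (f := fun p => p.2.1)
    (LipschitzWith.prod_fst.comp LipschitzWith.prod_snd) h1).intervalIntegrable_deriv
  refine (hd₁.abs.add hd₂.abs).mono_fun' ?_ (Eventually.of_forall fun t => ?_)
  · exact (((measurable_deriv _).pow_const 2).add
      ((measurable_deriv _).pow_const 2)).sqrt.aestronglyMeasurable
  · dsimp only
    rw [Real.norm_of_nonneg (Real.sqrt_nonneg _)]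
    exact sqrt_sq_add_sq_le_abs_add_abs _ _

lemma abs_fst_sub_le_sRLength3 (hγ : IsLipCurve3 γ) {u : ℝ} (hu : u ∈ Icc (0 : ℝ) 1) :
    |(γ u).1 - (γ 0).1| ≤ sRLength3 γ :=
  abs_sub_le_integral_of_abs_deriv_le hu
    (hγ.absolutelyContinuousOnInterval_comp (f := fun p => p.1) LipschitzWith.prod_fst hu)
    hγ.intervalIntegrable_sRLength3_integrand fun _ => Real.abs_le_sqrt (by nlinarith)

lemma abs_snd_fst_sub_le_sRLength3 (hγ : IsLipCurve3 γ) {u : ℝ} (hu : u ∈ Icc (0 : ℝ) 1) :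
    |(γ u).2.1 - (γ 0).2.1| ≤ sRLength3 γ :=
  abs_sub_le_integral_of_abs_deriv_le hu
    (hγ.absolutelyContinuousOnInterval_comp (f := fun p => p.2.1)
      (LipschitzWith.prod_fst.comp LipschitzWith.prod_snd) hu)
    hγ.intervalIntegrable_sRLength3_integrand fun _ => Real.abs_le_sqrt (by nlinarith)

lemma abs_snd_snd_le_sRLength3_sq (hγ : IsLipCurve3 γ) (hh : Horizontal γ)
    (h0 : γ 0 = (0, 0, 0)) : |(γ 1).2.2| ≤ sRLength3 γ ^ 2 := by
  have h1 : (1 : ℝ) ∈ Icc (0 : ℝ) 1 := ⟨zero_le_one, le_rfl⟩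
  have hx₁ : ∀ t ∈ Icc (0 : ℝ) 1, |(γ t).1| ≤ sRLength3 γ := fun t ht => by
    simpa [h0] using hγ.abs_fst_sub_le_sRLength3 ht
  have hx₂ : ∀ t ∈ Icc (0 : ℝ) 1, |(γ t).2.1| ≤ sRLength3 γ := fun t ht => by
    simpa [h0] using hγ.abs_snd_fst_sub_le_sRLength3 ht
  have hac := hγ.absolutelyContinuousOnInterval_comp (f := fun p => p.2.2)
    (LipschitzWith.prod_snd.comp LipschitzWith.prod_snd) h1
  calc |(γ 1).2.2| = |∫ t in (0 : ℝ)..1, deriv (fun s => (γ s).2.2) t| := by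
        rw [hac.integral_deriv_eq_sub, h0, sub_zero]
    _ ≤ ∫ t in (0 : ℝ)..1, |deriv (fun s => (γ s).2.2) t| :=
        intervalIntegral.abs_integral_le_integral_abs zero_le_one
    _ ≤ ∫ t in (0 : ℝ)..1, sRLength3 γ * √(deriv (fun s => (γ s).1) t ^ 2 +
          deriv (fun s => (γ s).2.1) t ^ 2) := by
        refine intervalIntegral.integral_mono_ae_restrict zero_le_one
          hac.intervalIntegrable_deriv.abs
          (hγ.intervalIntegrable_sRLength3_integrand.const_mul _) ?_
        filter_upwards [hh, ae_restrict_mem measurableSet_Icc] with t ht htI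
        rw [ht]
        exact abs_half_cross_le (hx₁ t htI) (hx₂ t htI)
    _ = sRLength3 γ ^ 2 := by rw [intervalIntegral.integral_const_mul, sq]; rfl

end IsLipCurve3

lemma AdmCurve.lorLength3_le {p q : ℝ × ℝ × ℝ} {γ : ℝ → ℝ × ℝ × ℝ} (h : AdmCurve p q γ) :
    lorLength3 γ ≤ q.1 - p.1 := by
  obtain ⟨hγ, -, hc, rfl, rfl⟩ := h
  have hac := hγ.absolutelyContinuousOnInterval_comp (f := fun p => p.1)
    LipschitzWith.prod_fst ⟨zero_le_one, le_rfl⟩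
  rw [← hac.integral_deriv_eq_sub]
  refine intervalIntegral.integral_mono_ae_restrict zero_le_one ?_ hac.intervalIntegrable_deriv ?_
  · refine hac.intervalIntegrable_deriv.abs.mono_fun' ?_ (Eventually.of_forall fun t => ?_)
    · exact (((measurable_deriv _).pow_const 2).sub
        ((measurable_deriv _).pow_const 2)).sqrt.aestronglyMeasurable
    · dsimp only
      rw [Real.norm_of_nonneg (Real.sqrt_nonneg _)]
      exact sqrt_sq_sub_sq_le_abs _ _
  · filter_upwards [hc] with t ht
    exact (sqrt_sq_sub_sq_le_abs _ _).trans_eq (abs_of_pos ht.2)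

noncomputable def heisMul (p q : ℝ × ℝ × ℝ) : ℝ × ℝ × ℝ :=
  (p.1 + q.1, p.2.1 + q.2.1, p.2.2 + q.2.2 + (p.1 * q.2.1 - q.1 * p.2.1) / 2)

@[simp]
lemma heisMul_zero (p : ℝ × ℝ × ℝ) : heisMul p (0, 0, 0) = p := by
  simp [heisMul]

structure HasHorizontalVelocity (γ : ℝ → ℝ × ℝ × ℝ) (v₁ v₂ : ℝ → ℝ) : Prop where
  hasDerivAt_fst : ∀ t, HasDerivAt (fun s => (γ s).1) (v₁ t) t
  hasDerivAt_snd_fst : ∀ t, HasDerivAt (fun s => (γ s).2.1) (v₂ t) t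
  hasDerivAt_snd_snd :
    ∀ t, HasDerivAt (fun s => (γ s).2.2) (((γ t).1 * v₂ t - v₁ t * (γ t).2.1) / 2) t

namespace HasHorizontalVelocity

variable {γ : ℝ → ℝ × ℝ × ℝ} {v₁ v₂ : ℝ → ℝ}

lemma horizontal (h : HasHorizontalVelocity γ v₁ v₂) : Horizontal γ :=
  Eventually.of_forall fun t => by
    rw [(h.hasDerivAt_snd_snd t).deriv, (h.hasDerivAt_snd_fst t).deriv, (h.hasDerivAt_fst t).deriv]

lemma isLipCurve3 (h : HasHorizontalVelocity γ v₁ v₂) (hv₁ : Continuous v₁)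
    (hv₂ : Continuous v₂) : IsLipCurve3 γ := by
  have hd : ∀ t, HasDerivAt γ (v₁ t, v₂ t, ((γ t).1 * v₂ t - v₁ t * (γ t).2.1) / 2) t :=
    fun t => (h.hasDerivAt_fst t).prodMk ((h.hasDerivAt_snd_fst t).prodMk (h.hasDerivAt_snd_snd t))
  have hγ : Continuous γ := continuous_iff_continuousAt.2 fun t => (hd t).continuousAt
  have hc : Continuous fun t => (v₁ t, v₂ t, ((γ t).1 * v₂ t - v₁ t * (γ t).2.1) / 2) := by
    fun_prop
  obtain ⟨M, hM⟩ := isCompact_Icc.exists_bound_of_continuousOn hc.continuousOn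
  refine ⟨M.toNNReal, (convex_Icc 0 1).lipschitzOnWith_of_nnnorm_hasDerivWithin_le
    (fun t _ => (hd t).hasDerivWithinAt) fun t ht => ?_⟩
  rw [← NNReal.coe_le_coe, coe_nnnorm, Real.coe_toNNReal']
  exact (hM t ht).trans (le_max_left _ _)

lemma isFDCausal3 (h : HasHorizontalVelocity γ v₁ v₂)
    (hv : ∀ t ∈ Icc (0 : ℝ) 1, |v₂ t| ≤ v₁ t ∧ 0 < v₁ t) : IsFDCausal3 γ := by
  filter_upwards [ae_restrict_mem measurableSet_Icc] with t ht
  rw [(h.hasDerivAt_snd_fst t).deriv, (h.hasDerivAt_fst t).deriv]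
  exact hv t ht

lemma lorLength3_eq (h : HasHorizontalVelocity γ v₁ v₂) :
    lorLength3 γ = ∫ t in (0 : ℝ)..1, √(v₁ t ^ 2 - v₂ t ^ 2) := by
  simp only [lorLength3, fun t => (h.hasDerivAt_fst t).deriv,
    fun t => (h.hasDerivAt_snd_fst t).deriv]

lemma heisMul_left (h : HasHorizontalVelocity γ v₁ v₂) (p : ℝ × ℝ × ℝ) :
    HasHorizontalVelocity (fun t => heisMul p (γ t)) v₁ v₂ where
  hasDerivAt_fst t := (h.hasDerivAt_fst t).const_add p.1
  hasDerivAt_snd_fst t := (h.hasDerivAt_snd_fst t).const_add p.2.1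
  hasDerivAt_snd_snd t := by
    refine (((h.hasDerivAt_snd_snd t).const_add p.2.2).add
      ((((h.hasDerivAt_snd_fst t).const_mul p.1).sub
        ((h.hasDerivAt_fst t).mul_const p.2.1)).div_const 2)).congr_deriv ?_
    simp only [heisMul]
    ring

end HasHorizontalVelocity

/-- The horizontal lift from the origin of the planar curve
`t ↦ (a t + B (t² - t³), b t + C (t - t²))`; its height is half the signed area swept. -/
noncomputable def polyCurve (a b B C t : ℝ) : ℝ × ℝ × ℝ :=
  (a * t + B * (t ^ 2 - t ^ 3), b * t + C * (t - t ^ 2),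
    -(a * C + B * b + B * C) * t ^ 3 / 6 + B * (b + C) * t ^ 4 / 4 - B * C * t ^ 5 / 10)

lemma polyCurve_zero (a b B C : ℝ) : polyCurve a b B C 0 = (0, 0, 0) := by
  simp [polyCurve]

lemma polyCurve_one (a b B C : ℝ) :
    polyCurve a b B C 1 = (a, b, -(a * C) / 6 + B * b / 12 - B * C / 60) := by
  simp only [polyCurve, Prod.mk.injEq]
  refine ⟨by ring, by ring, by ring⟩

lemma hasHorizontalVelocity_polyCurve (a b B C : ℝ) :
    HasHorizontalVelocity (polyCurve a b B C) (fun t => a + B * (2 * t - 3 * t ^ 2))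
      (fun t => b + C * (1 - 2 * t)) where
  hasDerivAt_fst t := by
    refine (((hasDerivAt_id t).const_mul a).add
      (((hasDerivAt_pow 2 t).sub (hasDerivAt_pow 3 t)).const_mul B)).congr_deriv ?_
    norm_num
  hasDerivAt_snd_fst t := by
    refine (((hasDerivAt_id t).const_mul b).add
      (((hasDerivAt_id t).sub (hasDerivAt_pow 2 t)).const_mul C)).congr_deriv ?_
    norm_num
  hasDerivAt_snd_snd t := by
    refine ((((hasDerivAt_pow 3 t).const_mul (-(a * C + B * b + B * C))).div_const 6).add
      (((hasDerivAt_pow 4 t).const_mul (B * (b + C))).div_const 4)).sub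
      (((hasDerivAt_pow 5 t).const_mul (B * C)).div_const 10) |>.congr_deriv ?_
    norm_num [polyCurve]
    ring

lemma admCurve_heisMul_polyCurve (p : ℝ × ℝ × ℝ) {a b C : ℝ} (ha : 0 < a) (h : |b| + |C| ≤ a) :
    AdmCurve p (heisMul p (a, b, -(a * C) / 6)) (fun t => heisMul p (polyCurve a b 0 C t)) := by
  have hv := (hasHorizontalVelocity_polyCurve a b 0 C).heisMul_left p
  have hv₂ : ∀ t ∈ Icc (0 : ℝ) 1, |b + C * (1 - 2 * t)| ≤ a := fun t ht => by
    have h12 : |1 - 2 * t| ≤ 1 := abs_le.mpr ⟨by linarith [ht.2], by linarith [ht.1]⟩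
    calc |b + C * (1 - 2 * t)| ≤ |b| + |C| * |1 - 2 * t| := by
          rw [← abs_mul]; exact abs_add_le _ _
      _ ≤ |b| + |C| := by gcongr; exact mul_le_of_le_one_right (abs_nonneg _) h12
      _ ≤ a := h
  exact ⟨hv.isLipCurve3 (by fun_prop) (by fun_prop), hv.horizontal,
    hv.isFDCausal3 fun t ht => ⟨by simpa using hv₂ t ht, by simpa using ha⟩,
    by simp [polyCurve_zero], by simp [polyCurve_one]⟩

lemma causalLE_heisMul (p : ℝ × ℝ × ℝ) {a b c : ℝ} (ha : 0 < a)
    (h : a * |b| + 6 * |c| ≤ a ^ 2) : CausalLE p (heisMul p (a, b, c)) := by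
  have hc : -(a * (-6 * c / a)) / 6 = c := by field_simp
  refine Or.inr ⟨_, hc ▸ admCurve_heisMul_polyCurve p ha ?_⟩
  rw [abs_div, abs_mul, abs_of_pos ha, abs_neg, abs_of_pos (by norm_num : (0 : ℝ) < 6),
    ← sub_nonneg]
  have : a - (|b| + 6 * |c| / a) = (a ^ 2 - (a * |b| + 6 * |c|)) / a := by field_simp
  rw [this]
  exact div_nonneg (by linarith) ha.le

lemma timeSep_heisMul (p : ℝ × ℝ × ℝ) {a : ℝ} (ha : 0 < a) :
    timeSep p (heisMul p (a, 0, 0)) = a := by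
  have hadm := admCurve_heisMul_polyCurve p ha (b := 0) (C := 0) (by simpa using ha.le)
  rw [mul_zero, neg_zero, zero_div] at hadm
  refine IsGreatest.csSup_eq ⟨⟨_, hadm, ?_⟩, ?_⟩
  · rw [((hasHorizontalVelocity_polyCurve a 0 0 0).heisMul_left p).lorLength3_eq]
    simp [Real.sqrt_sq ha.le]
  · rintro _ ⟨γ, hγ, rfl⟩
    simpa [heisMul] using hγ.lorLength3_le

lemma exists_horizontal_curve_from_zero (x : ℝ × ℝ × ℝ) :
    ∃ γ, IsLipCurve3 γ ∧ Horizontal γ ∧ γ 0 = (0, 0, 0) ∧ γ 1 = x := by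
  -- this choice of `B` makes the endpoint height `C + B * x.2.1 / 12`
  set B := -10 * x.1 - 60
  have hv := hasHorizontalVelocity_polyCurve x.1 x.2.1 B (x.2.2 - B * x.2.1 / 12)
  refine ⟨_, hv.isLipCurve3 (by fun_prop) (by fun_prop), hv.horizontal, polyCurve_zero .., ?_⟩
  rw [polyCurve_one]
  refine Prod.ext rfl (Prod.ext rfl ?_)
  simp only [B]
  ring

lemma abs_le_of_sRDist_lt {x : ℝ × ℝ × ℝ} {r : ℝ} (h : sRDist (0, 0, 0) x < r) :
    |x.1| ≤ r ∧ |x.2.1| ≤ r ∧ |x.2.2| ≤ r ^ 2 := by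
  obtain ⟨γ₀, hγ₀⟩ := exists_horizontal_curve_from_zero x
  obtain ⟨_, ⟨γ, ⟨hγ, hh, h0, rfl⟩, rfl⟩, hlt⟩ :=
    exists_lt_of_csInf_lt (Set.Nonempty.image _ ⟨γ₀, hγ₀⟩) h
  have h1 : (1 : ℝ) ∈ Icc (0 : ℝ) 1 := ⟨zero_le_one, le_rfl⟩
  have hx₁ := hγ.abs_fst_sub_le_sRLength3 h1
  have hx₂ := hγ.abs_snd_fst_sub_le_sRLength3 h1
  rw [h0, sub_zero] at hx₁ hx₂
  exact ⟨hx₁.trans hlt.le, hx₂.trans hlt.le, (hγ.abs_snd_snd_le_sRLength3_sq hh h0).trans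
    (pow_le_pow_left₀ ((abs_nonneg _).trans hx₁) hlt.le 2)⟩

lemma mem_causalDiamond_of_abs_le {r : ℝ} (hr : 0 < r) {x : ℝ × ℝ × ℝ} (h₁ : |x.1| ≤ r)
    (h₂ : |x.2.1| ≤ r) (h₃ : |x.2.2| ≤ r ^ 2) :
    x ∈ causalDiamond (-(10 * r), 0, 0) (10 * r, 0, 0) := by
  obtain ⟨h₁l, h₁u⟩ := abs_le.mp h₁
  obtain ⟨h₂l, h₂u⟩ := abs_le.mp h₂
  obtain ⟨h₃l, h₃u⟩ := abs_le.mp h₃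
  have hcausal : ∀ a b c : ℝ, 9 * r ≤ a → a ≤ 11 * r → |b| ≤ r → |c| ≤ 6 * r ^ 2 →
      a * |b| + 6 * |c| ≤ a ^ 2 := fun a b c ha₁ ha₂ hb hc => by
    nlinarith [mul_le_mul ha₂ hb (abs_nonneg b) (by linarith)]
  constructor
  · convert causalLE_heisMul (-(10 * r), 0, 0) (a := x.1 + 10 * r) (b := x.2.1)
      (c := x.2.2 + 5 * r * x.2.1) (by linarith)
      (hcausal _ _ _ (by linarith) (by linarith) h₂ (abs_le.mpr ⟨by nlinarith, by nlinarith⟩)) using 1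
    refine Prod.ext ?_ (Prod.ext ?_ ?_) <;> simp only [heisMul] <;> ring
  · convert causalLE_heisMul x (a := 10 * r - x.1) (b := -x.2.1) (c := -x.2.2 + 5 * r * x.2.1)
      (by linarith) (hcausal _ _ _ (by linarith) (by linarith) (by rwa [abs_neg])
        (abs_le.mpr ⟨by nlinarith, by nlinarith⟩)) using 1
    simp only [heisMul, Prod.mk.injEq]
    exact ⟨by ring, by ring, by ring⟩

/-- there is a constant `D > 0` such that for every `r > 0`, the
sub-Riemannian ball of radius `r` around the origin is contained in the causal
diamond `J((−Dr,0,0),(Dr,0,0))`, whose vertices have time separation `2Dr`. -/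
theorem ball_subset_diamond :
    ∃ D : ℝ, 0 < D ∧ ∀ r : ℝ, 0 < r →
      {x : ℝ × ℝ × ℝ | sRDist (0, 0, 0) x < r} ⊆
        causalDiamond (-(D * r), 0, 0) (D * r, 0, 0) ∧
      timeSep (-(D * r), 0, 0) (D * r, 0, 0) = 2 * D * r := by
  refine ⟨10, by norm_num, fun r hr => ⟨fun x hx => ?_, ?_⟩⟩
  · obtain ⟨h₁, h₂, h₃⟩ := abs_le_of_sRDist_lt hx
    exact mem_causalDiamond_of_abs_le hr h₁ h₂ h₃
  · have hq : heisMul (-(10 * r), 0, 0) (20 * r, 0, 0) = (10 * r, 0, 0) := by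
      ext <;> simp only [heisMul] <;> ring
    rw [← hq, timeSep_heisMul _ (by positivity)]
    ring
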